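/- arXiv:2003.03451 — 4 statements merged into one kernel-verified Lean document; each statement's English description precedes it below -/
import Mathlib

section
/- Let (X, d, ≪, ≤, τ) be a Lorentzian length space and let x ∈ X. Then there exist sequences (p_n) and (q_n) in X converging to x (in the metric d) such that p_n ≪ x ≪ q_n for all n, p_n ≪ p_{n+1} for all n, and q_{n+1} ≪ q_n for all n. -/
open scoped NNReal ENNReal
open Set Filter Topology

/-- A Lorentzian pre-length space: a causal space `(X, ≪, ≤)` carried by a metric space `X`,
together with a time separation function `τ : X × X → [0, ∞]`. -/
structure LorentzianPreLengthSpace (X : Type*) [MetricSpace X] where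
  /-- The chronological relation `≪`. -/
  chron : X → X → Prop
  /-- The causal relation `≤`. -/
  causal : X → X → Prop
  chron_trans : ∀ {x y z : X}, chron x y → chron y z → chron x z
  causal_refl : ∀ x : X, causal x x
  causal_trans : ∀ {x y z : X}, causal x y → causal y z → causal x z
  chron_imp_causal : ∀ {x y : X}, chron x y → causal x y
  /-- The time separation function `τ`. -/
  tau : X → X → ℝ≥0∞
  tau_lsc : LowerSemicontinuous fun p : X × X => tau p.1 p.2
  tau_rev_triangle : ∀ {x y z : X}, causal x y → causal y z → tau x y + tau y z ≤ tau x z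
  tau_eq_zero : ∀ {x y : X}, ¬ causal x y → tau x y = 0
  tau_pos_iff : ∀ {x y : X}, 0 < tau x y ↔ chron x y

namespace LorentzianPreLengthSpace

variable {X : Type*} [MetricSpace X] (L : LorentzianPreLengthSpace X)

/-- Chronological future `I⁺(x)`. -/
def Iplus (x : X) : Set X := {y | L.chron x y}

/-- Chronological past `I⁻(x)`. -/
def Iminus (x : X) : Set X := {y | L.chron y x}

/-- Causal future `J⁺(x)`. -/
def Jplus (x : X) : Set X := {y | L.causal x y}

/-- Causal past `J⁻(x)`. -/
def Jminus (x : X) : Set X := {y | L.causal y x}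

/-- A future directed causal curve on `[a,b]`: non-constant, Lipschitz, and order preserving
from the order of `[a,b]` to the causal relation. -/
def IsFutureCausalCurve (γ : ℝ → X) (a b : ℝ) : Prop :=
  a < b ∧ (∃ K : ℝ≥0, LipschitzOnWith K γ (Icc a b)) ∧
    (∃ s ∈ Icc a b, ∃ t ∈ Icc a b, γ s ≠ γ t) ∧
    ∀ ⦃s⦄, s ∈ Icc a b → ∀ ⦃t⦄, t ∈ Icc a b → s < t → L.causal (γ s) (γ t)

/-- A future directed timelike curve on `[a,b]`. -/
def IsFutureTimelikeCurve (γ : ℝ → X) (a b : ℝ) : Prop :=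
  a < b ∧ (∃ K : ℝ≥0, LipschitzOnWith K γ (Icc a b)) ∧
    (∃ s ∈ Icc a b, ∃ t ∈ Icc a b, γ s ≠ γ t) ∧
    ∀ ⦃s⦄, s ∈ Icc a b → ∀ ⦃t⦄, t ∈ Icc a b → s < t → L.chron (γ s) (γ t)

/-- The `τ`-length of a curve: the infimum over all partitions
`a = t₀ < t₁ < ⋯ < t_N = b` (with `N ≥ 1`) of `∑ τ(γ(tᵢ), γ(tᵢ₊₁))`. -/
noncomputable def tauLength (γ : ℝ → X) (a b : ℝ) : ℝ≥0∞ :=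
  ⨅ n : ℕ, ⨅ t : {t : Fin (n + 2) → ℝ // StrictMono t ∧ t 0 = a ∧ t (Fin.last (n + 1)) = b},
    ∑ i : Fin (n + 1), L.tau (γ (t.1 i.castSucc)) (γ (t.1 i.succ))

/-- Causal path connectedness: causally related (distinct) points are joined by a future
directed causal curve, chronologically related points by a future directed timelike curve. -/
def CausallyPathConnected : Prop :=
  (∀ x y : X, L.causal x y → x ≠ y →
      ∃ γ : ℝ → X, ∃ a b : ℝ, L.IsFutureCausalCurve γ a b ∧ γ a = x ∧ γ b = y) ∧
  (∀ x y : X, L.chron x y →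
      ∃ γ : ℝ → X, ∃ a b : ℝ, L.IsFutureTimelikeCurve γ a b ∧ γ a = x ∧ γ b = y)

/-- `p ≤_U q`: there is a future directed causal curve from `p` to `q` with image in `U`. -/
def CausalInside (U : Set X) (p q : X) : Prop :=
  ∃ γ : ℝ → X, ∃ a b : ℝ, L.IsFutureCausalCurve γ a b ∧ γ a = p ∧ γ b = q ∧ γ '' Icc a b ⊆ U

/-- `U` is causally closed: the relation `≤_U` is closed under limits inside `U`. -/
def CausallyClosedNbhd (U : Set X) : Prop :=
  ∀ (p q : X) (pn qn : ℕ → X), (∀ n, L.CausalInside U (pn n) (qn n)) →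
    Tendsto pn atTop (𝓝 p) → Tendsto qn atTop (𝓝 q) → p ∈ U → q ∈ U → L.CausalInside U p q

/-- Every point has a causally closed open neighborhood. -/
def LocallyCausallyClosed : Prop :=
  ∀ x : X, ∃ U : Set X, IsOpen U ∧ x ∈ U ∧ L.CausallyClosedNbhd U

/-- Localizability: every point has a localizing open neighborhood `Ω`. -/
def Localizable : Prop :=
  ∀ x : X, ∃ Ω : Set X, IsOpen Ω ∧ x ∈ Ω ∧
    (∃ C : ℝ≥0, ∀ (γ : ℝ → X) (a b : ℝ), L.IsFutureCausalCurve γ a b →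
        γ '' Icc a b ⊆ Ω → eVariationOn γ (Icc a b) ≤ C) ∧
    ∃ ω : X → X → ℝ≥0∞,
      ContinuousOn (fun pq : X × X => ω pq.1 pq.2) (Ω ×ˢ Ω) ∧
      (∀ p ∈ Ω, ∀ q ∈ Ω, ω p q ≠ ⊤) ∧
      (∀ p ∈ Ω, ∀ q ∈ Ω, ∀ r ∈ Ω, L.causal p q → L.causal q r → ω p q + ω q r ≤ ω p r) ∧
      (∀ p ∈ Ω, ∀ q ∈ Ω, ¬ L.causal p q → ω p q = 0) ∧
      (∀ p ∈ Ω, ∀ q ∈ Ω, (0 < ω p q ↔ L.chron p q)) ∧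
      (∀ y ∈ Ω, (L.Iplus y ∩ Ω).Nonempty ∧ (L.Iminus y ∩ Ω).Nonempty) ∧
      (∀ p ∈ Ω, ∀ q ∈ Ω, L.causal p q → p ≠ q →
        ∃ γ : ℝ → X, ∃ a b : ℝ, L.IsFutureCausalCurve γ a b ∧ γ a = p ∧ γ b = q ∧
          γ '' Icc a b ⊆ Ω ∧ L.tauLength γ a b = ω p q ∧
          ∀ (σ : ℝ → X) (c e : ℝ), L.IsFutureCausalCurve σ c e → σ c = p → σ e = q →
            σ '' Icc c e ⊆ Ω → L.tauLength σ c e ≤ L.tauLength γ a b)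

/-- `L` is a Lorentzian length space: causally path connected, locally causally closed,
localizable, and `τ` is the supremum of `τ`-lengths of connecting causal curves
(the supremum of the empty set being `0`). -/
def IsLengthSpace : Prop :=
  L.CausallyPathConnected ∧ L.LocallyCausallyClosed ∧ L.Localizable ∧
    ∀ x y : X, L.tau x y = sSup {ℓ : ℝ≥0∞ | ∃ γ : ℝ → X, ∃ a b : ℝ,
      L.IsFutureCausalCurve γ a b ∧ γ a = x ∧ γ b = y ∧ ℓ = L.tauLength γ a b}

/-- `K⁺`: the smallest closed and transitive relation containing `J⁺`. -/
def Kplus : Set (X × X) :=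
  ⋂₀ {R : Set (X × X) | IsClosed R ∧ (∀ a b c : X, (a, b) ∈ R → (b, c) ∈ R → (a, c) ∈ R) ∧
      {pq : X × X | L.causal pq.1 pq.2} ⊆ R}

/-- The Alexandrov topology, generated by the chronological diamonds. -/
def AlexandrovTopology : TopologicalSpace X :=
  TopologicalSpace.generateFrom {s : Set X | ∃ x y : X, s = L.Iplus x ∩ L.Iminus y}

/-- Strong causality: the Alexandrov topology coincides with the metric topology. -/
def StronglyCausal : Prop :=
  L.AlexandrovTopology = (inferInstance : TopologicalSpace X)

/-- Non-total imprisonment: causal curves in a compact set have uniformly bounded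
`d`-arclength. -/
def NonTotallyImprisoning : Prop :=
  ∀ K : Set X, IsCompact K → ∃ C : ℝ≥0, ∀ (γ : ℝ → X) (a b : ℝ),
    L.IsFutureCausalCurve γ a b → γ '' Icc a b ⊆ K → eVariationOn γ (Icc a b) ≤ C

/-- Global hyperbolicity. -/
def GloballyHyperbolic : Prop :=
  L.NonTotallyImprisoning ∧ ∀ x y : X, IsCompact (L.Jplus x ∩ L.Jminus y)

/-- Causality: the causal relation is antisymmetric. -/
def Causal : Prop := ∀ x y : X, L.causal x y → L.causal y x → x = y

/-- Causal simplicity. -/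
def CausallySimple : Prop :=
  L.Causal ∧ ∀ x : X, IsClosed (L.Jplus x) ∧ IsClosed (L.Jminus x)

/-- Distinguishing. -/
def Distinguishing : Prop :=
  (∀ x y : X, L.Iplus x = L.Iplus y → x = y) ∧ (∀ x y : X, L.Iminus x = L.Iminus y → x = y)

/-- Reflectivity. -/
def Reflective : Prop :=
  (∀ x y : X, L.Iplus x ⊆ L.Iplus y → L.Iminus y ⊆ L.Iminus x) ∧
  (∀ x y : X, L.Iminus y ⊆ L.Iminus x → L.Iplus x ⊆ L.Iplus y)

/-- Causal continuity. -/
def CausallyContinuous : Prop := L.Distinguishing ∧ L.Reflective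

/-- Stable causality: `K⁺` is antisymmetric. -/
def StablyCausal : Prop := ∀ x y : X, (x, y) ∈ L.Kplus → (y, x) ∈ L.Kplus → x = y

end LorentzianPreLengthSpace

/-- A distance homothetic map: `τ̃(f p, f q) = c · τ(p, q)` for some constant `c > 0`. -/
def DistanceHomothetic {X Y : Type*} [MetricSpace X] [MetricSpace Y]
    (LX : LorentzianPreLengthSpace X) (LY : LorentzianPreLengthSpace Y) (f : X → Y) : Prop :=
  ∃ c : ℝ≥0, 0 < c ∧ ∀ p q : X, LY.tau (f p) (f q) = (c : ℝ≥0∞) * LX.tau p q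

/-- A locally causally Lipschitz map. -/
def LocallyCausallyLipschitz {X Y : Type*} [MetricSpace X] [MetricSpace Y]
    (LX : LorentzianPreLengthSpace X) (f : X → Y) : Prop :=
  ∀ x : X, ∃ U : Set X, IsOpen U ∧ x ∈ U ∧ ∃ M : ℝ, 0 < M ∧
    ∀ x1 ∈ U, ∀ x2 ∈ U, LX.causal x1 x2 → dist (f x1) (f x2) ≤ M * dist x1 x2

/-! Localizability puts points of `I⁻(x)` and `I⁺(x)` near any `x`, and causal path
connectedness joins them to `x` by timelike curves. Sampling these curves at times converging
monotonically to the endpoint at `x` gives the two sequences: chronology along a timelike curve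
follows the order of the parameter, and convergence is continuity of the (Lipschitz) curve. -/

namespace LorentzianPreLengthSpace

variable {X : Type*} [MetricSpace X] {L : LorentzianPreLengthSpace X}

lemma IsFutureTimelikeCurve.tendsto_comp {γ : ℝ → X} {a b t : ℝ}
    (hγ : L.IsFutureTimelikeCurve γ a b) (ht : t ∈ Icc a b) {u : ℕ → ℝ}
    (hu : ∀ n, u n ∈ Icc a b) (hut : Tendsto u atTop (𝓝 t)) :
    Tendsto (γ ∘ u) atTop (𝓝 (γ t)) :=
  let ⟨_, ⟨_, hK⟩, _⟩ := hγ
  (hK.continuousOn t ht).tendsto.comp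
    (tendsto_nhdsWithin_of_tendsto_nhds_of_eventually_within _ hut (Eventually.of_forall hu))

lemma IsFutureTimelikeCurve.exists_seq_chron_tendsto_end {γ : ℝ → X} {a b : ℝ}
    (hγ : L.IsFutureTimelikeCurve γ a b) :
    ∃ p : ℕ → X, Tendsto p atTop (𝓝 (γ b)) ∧ (∀ n, L.chron (p n) (γ b)) ∧
      ∀ n, L.chron (p n) (p (n + 1)) := by
  have hab := hγ.1
  have hchron := hγ.2.2.2
  obtain ⟨u, hu_mono, hu_mem, hu_lim⟩ := exists_seq_strictMono_tendsto' hab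
  have hu_Icc : ∀ n, u n ∈ Icc a b := fun n => Ioo_subset_Icc_self (hu_mem n)
  have hb : b ∈ Icc a b := right_mem_Icc.mpr hab.le
  exact ⟨γ ∘ u, hγ.tendsto_comp hb hu_Icc hu_lim,
    fun n => hchron (hu_Icc n) hb (hu_mem n).2,
    fun n => hchron (hu_Icc n) (hu_Icc (n + 1)) (hu_mono n.lt_succ_self)⟩

lemma IsFutureTimelikeCurve.exists_seq_chron_tendsto_start {γ : ℝ → X} {a b : ℝ}
    (hγ : L.IsFutureTimelikeCurve γ a b) :
    ∃ q : ℕ → X, Tendsto q atTop (𝓝 (γ a)) ∧ (∀ n, L.chron (γ a) (q n)) ∧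
      ∀ n, L.chron (q (n + 1)) (q n) := by
  have hab := hγ.1
  have hchron := hγ.2.2.2
  obtain ⟨u, hu_anti, hu_mem, hu_lim⟩ := exists_seq_strictAnti_tendsto' hab
  have hu_Icc : ∀ n, u n ∈ Icc a b := fun n => Ioo_subset_Icc_self (hu_mem n)
  have ha : a ∈ Icc a b := left_mem_Icc.mpr hab.le
  exact ⟨γ ∘ u, hγ.tendsto_comp ha hu_Icc hu_lim,
    fun n => hchron ha (hu_Icc n) (hu_mem n).1,
    fun n => hchron (hu_Icc (n + 1)) (hu_Icc n) (hu_anti n.lt_succ_self)⟩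

lemma IsLengthSpace.exists_chron_past_future (hL : L.IsLengthSpace) (x : X) :
    (∃ y, L.chron y x) ∧ ∃ z, L.chron x z := by
  obtain ⟨Ω, -, hxΩ, -, -, -, -, -, -, -, hI, -⟩ := hL.2.2.1 x
  obtain ⟨⟨z, hz, -⟩, ⟨y, hy, -⟩⟩ := hI x hxΩ
  exact ⟨⟨y, hy⟩, ⟨z, hz⟩⟩

end LorentzianPreLengthSpace

/-- Sequence Lemma: in a Lorentzian length space every point `x` admits
sequences `pₙ → x`, `qₙ → x` with `pₙ ≪ x ≪ qₙ`, `pₙ ≪ pₙ₊₁` and `qₙ₊₁ ≪ qₙ`. -/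
theorem sequence_lemma {X : Type*} [MetricSpace X] (L : LorentzianPreLengthSpace X)
    (hL : L.IsLengthSpace) (x : X) :
    ∃ p q : ℕ → X,
      Tendsto p atTop (𝓝 x) ∧ Tendsto q atTop (𝓝 x) ∧
      (∀ n : ℕ, L.chron (p n) x) ∧ (∀ n : ℕ, L.chron x (q n)) ∧
      (∀ n : ℕ, L.chron (p n) (p (n + 1))) ∧ (∀ n : ℕ, L.chron (q (n + 1)) (q n)) := by
  obtain ⟨⟨y, hyx⟩, ⟨z, hxz⟩⟩ := hL.exists_chron_past_future x
  obtain ⟨γ, a, b, hγ, -, rfl⟩ := hL.1.2 y x hyx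
  obtain ⟨σ, c, e, hσ, hσc, -⟩ := hL.1.2 (γ b) z hxz
  obtain ⟨p, hp, hpx, hpp⟩ := hγ.exists_seq_chron_tendsto_end
  obtain ⟨q, hq, hxq, hqq⟩ := hσ.exists_seq_chron_tendsto_start
  rw [hσc] at hq hxq
  exact ⟨p, q, hp, hq, hpx, hxq, hpp, hqq⟩
end

section
/- Let (X, d, ≪, ≤, τ) be a Lorentzian length space. Then for every x ∈ X the closure (in the metric topology) of I⁺(x) equals {y ∈ X : I⁺(y) ⊆ I⁺(x)}. -/
open scoped NNReal ENNReal
open Set Filter Topology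

/-!
Since `τ` is lower semicontinuous, every `I⁻(z)` is open; so if `y` is a limit of points of
`I⁺(x)` and `y ≪ z`, some point of `I⁺(x)` lies in `I⁻(z)`, whence `x ≪ z`. Conversely,
localizability provides some `z` with `y ≪ z`, and the initial points of a timelike curve from
`y` to `z` lie in `I⁺(y)` and converge to `y`; hence `y ∈ closure I⁺(y) ⊆ closure I⁺(x)`
whenever `I⁺(y) ⊆ I⁺(x)`.
-/

namespace LorentzianPreLengthSpace

variable {X : Type*} [MetricSpace X] (L : LorentzianPreLengthSpace X)

theorem isOpen_Iminus (z : X) : IsOpen (L.Iminus z) := by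
  have hpos : IsOpen {p : X × X | 0 < L.tau p.1 p.2} := L.tau_lsc.isOpen_preimage 0
  have hIminus : L.Iminus z = (fun w => (w, z)) ⁻¹' {p : X × X | 0 < L.tau p.1 p.2} := by
    ext w
    exact L.tau_pos_iff.symm
  rw [hIminus]
  exact hpos.preimage (continuous_id.prodMk continuous_const)

theorem Iplus_subset_of_mem_closure {x y : X} (hy : y ∈ closure (L.Iplus x)) :
    L.Iplus y ⊆ L.Iplus x := by
  intro z hz
  obtain ⟨w, hwz, hxw⟩ := mem_closure_iff.mp hy _ (L.isOpen_Iminus z) hz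
  exact L.chron_trans hxw hwz

variable {L}

theorem IsFutureTimelikeCurve.mem_closure_Iplus {γ : ℝ → X} {a b : ℝ}
    (hγ : L.IsFutureTimelikeCurve γ a b) : γ a ∈ closure (L.Iplus (γ a)) := by
  obtain ⟨hab, ⟨K, hK⟩, -, hchron⟩ := hγ
  have hcont : ContinuousWithinAt γ (Ioc a b) a :=
    (hK.continuousOn a (left_mem_Icc.mpr hab.le)).mono Ioc_subset_Icc_self
  have ha : a ∈ closure (Ioc a b) := by
    rw [closure_Ioc hab.ne]
    exact left_mem_Icc.mpr hab.le
  refine closure_mono ?_ (hcont.mem_closure_image ha)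
  rintro _ ⟨t, ht, rfl⟩
  exact hchron (left_mem_Icc.mpr hab.le) (Ioc_subset_Icc_self ht) ht.1

theorem CausallyPathConnected.mem_closure_Iplus_self (hL : L.CausallyPathConnected) {y : X}
    (hy : (L.Iplus y).Nonempty) : y ∈ closure (L.Iplus y) := by
  obtain ⟨z, hz⟩ := hy
  obtain ⟨γ, a, b, hγ, hγa, -⟩ := hL.2 y z hz
  exact hγa ▸ hγ.mem_closure_Iplus

theorem Localizable.Iplus_nonempty (hL : L.Localizable) (y : X) : (L.Iplus y).Nonempty := by
  obtain ⟨Ω, -, hyΩ, -, -, -, -, -, -, -, hI, -⟩ := hL y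
  exact (hI y hyΩ).1.mono inter_subset_left

end LorentzianPreLengthSpace

/-- in a Lorentzian length space,
`closure (I⁺(x)) = {y : I⁺(y) ⊆ I⁺(x)}`. -/
theorem closure_Iplus {X : Type*} [MetricSpace X] (L : LorentzianPreLengthSpace X)
    (hL : L.IsLengthSpace) (x : X) :
    closure (L.Iplus x) = {y : X | L.Iplus y ⊆ L.Iplus x} := by
  ext y
  refine ⟨L.Iplus_subset_of_mem_closure, fun hsub => ?_⟩
  have hy : y ∈ closure (L.Iplus y) :=
    hL.1.mem_closure_Iplus_self (hL.2.2.1.Iplus_nonempty y)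
  exact closure_mono hsub hy
end

section
/- Let (X, d, ≪, ≤, τ) be a Lorentzian length space. Then for every x ∈ X the closure (in the metric topology) of I⁻(x) equals {y ∈ X : I⁻(y) ⊆ I⁻(x)}. -/
open scoped NNReal ENNReal
open Set Filter Topology

/-!
Since `τ` is lower semicontinuous and `τ(z, ·) > 0` exactly on `I⁺(z)`, chronological futures are
open. Hence if `y` is a limit of points of `I⁻(x)` and `z ≪ y`, the open set `I⁺(z)` contains
some `w ≪ x`, so `z ≪ x`. Conversely every point `y` of a Lorentzian length space has a nonempty
past, and a timelike curve ending at `y` approximates `y` from within `I⁻(y)`; so `y` lies in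
the closure of `I⁻(y)`, which is contained in the closure of `I⁻(x)` when `I⁻(y) ⊆ I⁻(x)`.
-/

namespace LorentzianPreLengthSpace

variable {X : Type*} [MetricSpace X] (L : LorentzianPreLengthSpace X)

theorem isOpen_Iplus (z : X) : IsOpen (L.Iplus z) := by
  have hlsc : LowerSemicontinuous fun w => L.tau z w :=
    L.tau_lsc.comp (continuous_const.prodMk continuous_id)
  simpa only [Iplus, ← L.tau_pos_iff, preimage, mem_Ioi] using hlsc.isOpen_preimage 0

theorem Iminus_subset_of_mem_closure {x y : X} (hy : y ∈ closure (L.Iminus x)) :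
    L.Iminus y ⊆ L.Iminus x := fun z hzy => by
  obtain ⟨w, hzw, hwx⟩ := _root_.mem_closure_iff.mp hy (L.Iplus z) (L.isOpen_Iplus z) hzy
  exact L.chron_trans hzw hwx

variable {L}

theorem IsFutureTimelikeCurve.mem_closure_Iminus_endpoint {γ : ℝ → X} {a b : ℝ}
    (hγ : L.IsFutureTimelikeCurve γ a b) : γ b ∈ closure (L.Iminus (γ b)) := by
  obtain ⟨hab, ⟨K, hK⟩, -, hchron⟩ := hγ
  have hb : b ∈ Icc a b := right_mem_Icc.mpr hab.le
  have hcont : ContinuousWithinAt γ (Ico a b) b :=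
    (hK.continuousOn.continuousWithinAt hb).mono Ico_subset_Icc_self
  refine hcont.mem_closure (by rw [closure_Ico hab.ne]; exact hb) fun t ht => ?_
  exact hchron (Ico_subset_Icc_self ht) hb ht.2

theorem Localizable.Iminus_nonempty (hloc : L.Localizable) (y : X) : (L.Iminus y).Nonempty := by
  obtain ⟨Ω, -, hyΩ, -, -, -, -, -, -, -, hcone, -⟩ := hloc y
  exact (hcone y hyΩ).2.mono inter_subset_left

theorem CausallyPathConnected.mem_closure_Iminus_self (hpc : L.CausallyPathConnected) {y : X}
    (hne : (L.Iminus y).Nonempty) : y ∈ closure (L.Iminus y) := by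
  obtain ⟨z, hzy⟩ := hne
  obtain ⟨γ, a, b, hγ, -, rfl⟩ := hpc.2 z y hzy
  exact hγ.mem_closure_Iminus_endpoint

end LorentzianPreLengthSpace

/-- in a Lorentzian length space,
`closure (I⁻(x)) = {y : I⁻(y) ⊆ I⁻(x)}`. -/
theorem closure_Iminus {X : Type*} [MetricSpace X] (L : LorentzianPreLengthSpace X)
    (hL : L.IsLengthSpace) (x : X) :
    closure (L.Iminus x) = {y : X | L.Iminus y ⊆ L.Iminus x} := by
  refine Subset.antisymm (fun y hy => L.Iminus_subset_of_mem_closure hy) fun y hyx => ?_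
  have hy : y ∈ closure (L.Iminus y) :=
    hL.1.mem_closure_Iminus_self (hL.2.2.1.Iminus_nonempty y)
  exact closure_mono hyx hy
end

section
/- Let (X, d, ≪, ≤, τ) be a Lorentzian length space. Then for every x ∈ X the metric closure of I⁺(x) equals the metric closure of J⁺(x), and the metric closure of I⁻(x) equals the metric closure of J⁻(x). -/
open scoped NNReal ENNReal
open Set Filter Topology

/-! Push-up (`x ≤ y ≪ z → x ≪ z`) gives `I⁺(y) ⊆ I⁺(x)` for `y ∈ J⁺(x)`, so it suffices that every
`y` lies in the closure of its own `I⁺(y)`. Localizability provides some `z` with `y ≪ z`, and a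
timelike curve from `y` to `z` approaches `y` through points of `I⁺(y)`. The past is dual. -/

namespace LorentzianPreLengthSpace

variable {X : Type*} [MetricSpace X] (L : LorentzianPreLengthSpace X)

theorem chron_of_causal_of_chron {x y z : X} (hxy : L.causal x y) (hyz : L.chron y z) :
    L.chron x z :=
  L.tau_pos_iff.mp <| (L.tau_pos_iff.mpr hyz).trans_le <|
    le_add_self.trans (L.tau_rev_triangle hxy (L.chron_imp_causal hyz))

theorem chron_of_chron_of_causal {x y z : X} (hxy : L.chron x y) (hyz : L.causal y z) :
    L.chron x z :=
  L.tau_pos_iff.mp <| (L.tau_pos_iff.mpr hxy).trans_le <|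
    le_self_add.trans (L.tau_rev_triangle (L.chron_imp_causal hxy) hyz)

theorem Iplus_subset_Iplus_of_causal {x y : X} (h : L.causal x y) : L.Iplus y ⊆ L.Iplus x :=
  fun _ hz => L.chron_of_causal_of_chron h hz

theorem Iminus_subset_Iminus_of_causal {x y : X} (h : L.causal x y) :
    L.Iminus x ⊆ L.Iminus y :=
  fun _ hz => L.chron_of_chron_of_causal hz h

namespace IsFutureTimelikeCurve

variable {L} {γ : ℝ → X} {a b : ℝ}

theorem continuousOn (h : L.IsFutureTimelikeCurve γ a b) : ContinuousOn γ (Icc a b) :=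
  let ⟨_, ⟨_, hK⟩, _⟩ := h
  hK.continuousOn

theorem image_Ioc_subset_Iplus (h : L.IsFutureTimelikeCurve γ a b) :
    γ '' Ioc a b ⊆ L.Iplus (γ a) := by
  rintro _ ⟨t, ht, rfl⟩
  exact h.2.2.2 (left_mem_Icc.2 h.1.le) (Ioc_subset_Icc_self ht) ht.1

theorem image_Ico_subset_Iminus (h : L.IsFutureTimelikeCurve γ a b) :
    γ '' Ico a b ⊆ L.Iminus (γ b) := by
  rintro _ ⟨t, ht, rfl⟩
  exact h.2.2.2 (Ico_subset_Icc_self ht) (right_mem_Icc.2 h.1.le) ht.2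

theorem left_mem_closure_image_Ioc (h : L.IsFutureTimelikeCurve γ a b) :
    γ a ∈ closure (γ '' Ioc a b) := by
  have ha : a ∈ Icc a b := left_mem_Icc.2 h.1.le
  refine ((h.continuousOn a ha).mono Ioc_subset_Icc_self).mem_closure_image ?_
  rwa [closure_Ioc h.1.ne]

theorem right_mem_closure_image_Ico (h : L.IsFutureTimelikeCurve γ a b) :
    γ b ∈ closure (γ '' Ico a b) := by
  have hb : b ∈ Icc a b := right_mem_Icc.2 h.1.le
  refine ((h.continuousOn b hb).mono Ico_subset_Icc_self).mem_closure_image ?_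
  rwa [closure_Ico h.1.ne]

end IsFutureTimelikeCurve

variable {L}

theorem Localizable.exists_chron (h : L.Localizable) (y : X) :
    (∃ z, L.chron y z) ∧ ∃ w, L.chron w y := by
  obtain ⟨Ω, -, hyΩ, -, -, -, -, -, -, -, hne, -⟩ := h y
  obtain ⟨⟨z, hz, -⟩, ⟨w, hw, -⟩⟩ := hne y hyΩ
  exact ⟨⟨z, hz⟩, ⟨w, hw⟩⟩

theorem CausallyPathConnected.self_mem_closure_Iplus (h : L.CausallyPathConnected) {y z : X}
    (hyz : L.chron y z) : y ∈ closure (L.Iplus y) := by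
  obtain ⟨γ, a, b, hγ, rfl, -⟩ := h.2 y z hyz
  exact closure_mono hγ.image_Ioc_subset_Iplus hγ.left_mem_closure_image_Ioc

theorem CausallyPathConnected.self_mem_closure_Iminus (h : L.CausallyPathConnected) {w y : X}
    (hwy : L.chron w y) : y ∈ closure (L.Iminus y) := by
  obtain ⟨γ, a, b, hγ, -, rfl⟩ := h.2 w y hwy
  exact closure_mono hγ.image_Ico_subset_Iminus hγ.right_mem_closure_image_Ico

theorem closure_Iplus_eq_closure_Jplus (hself : ∀ y, y ∈ closure (L.Iplus y)) (x : X) :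
    closure (L.Iplus x) = closure (L.Jplus x) :=
  (closure_mono fun _ => L.chron_imp_causal).antisymm <| closure_minimal
    (fun y hy => closure_mono (L.Iplus_subset_Iplus_of_causal hy) (hself y)) isClosed_closure

theorem closure_Iminus_eq_closure_Jminus (hself : ∀ y, y ∈ closure (L.Iminus y)) (x : X) :
    closure (L.Iminus x) = closure (L.Jminus x) :=
  (closure_mono fun _ => L.chron_imp_causal).antisymm <| closure_minimal
    (fun y hy => closure_mono (L.Iminus_subset_Iminus_of_causal hy) (hself y)) isClosed_closure

end LorentzianPreLengthSpace

/-- in a Lorentzian length space, `closure (I⁺(x)) = closure (J⁺(x))` and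
`closure (I⁻(x)) = closure (J⁻(x))`. -/
theorem closure_I_eq_closure_J {X : Type*} [MetricSpace X] (L : LorentzianPreLengthSpace X)
    (hL : L.IsLengthSpace) (x : X) :
    closure (L.Iplus x) = closure (L.Jplus x) ∧
    closure (L.Iminus x) = closure (L.Jminus x) := by
  obtain ⟨hpc, -, hloc, -⟩ := hL
  refine ⟨L.closure_Iplus_eq_closure_Jplus (fun y => ?_) x,
    L.closure_Iminus_eq_closure_Jminus (fun y => ?_) x⟩
  · obtain ⟨z, hz⟩ := (hloc.exists_chron y).1
    exact hpc.self_mem_closure_Iplus hz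
  · obtain ⟨w, hw⟩ := (hloc.exists_chron y).2
    exact hpc.self_mem_closure_Iminus hw
end
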